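/- arXiv:1710.09669 — 2 statements merged into one kernel-verified Lean document; each statement's English description precedes it below -/
import Mathlib

section
/- If the near-horizon data (F, h_a, h_{ab}) of a degenerate horizon component in a static vacuum black hole with Λ = 0 satisfies the near-horizon equations R_{ab} = ½ h_a h_b − ∇_{(a} h_{b)} and F = ½|h|² − ½∇ₐhᵃ, with F ≤ 0 on the compact closed cross-section H, then F = 0, h_a = 0, and the metric h_{ab} is Ricci flat. -/
open MeasureTheory

/-! Integrating `F = ½|h|² − ½ ∇ₐhᵃ` over the closed cross-section kills the divergence term, so
`∫ F = ½ ∫ |h|² ≥ 0`. Since `F ≤ 0`, this forces `∫ F = 0` and `∫ |h|² = 0`; both integrands are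
continuous of constant sign and the measure charges every open set, so `F ≡ 0` and `|h|² ≡ 0`,
i.e. `h = 0`. The first near-horizon equation then reads `Ric = 0`. -/

theorem Continuous.eq_zero_of_integral_eq_zero_of_nonneg {X : Type*} [TopologicalSpace X]
    [MeasurableSpace X] {μ : Measure X} [μ.IsOpenPosMeasure] {f : X → ℝ} (hf : Continuous f)
    (hfi : Integrable f μ) (hf_nonneg : 0 ≤ f) (hf_int : ∫ x, f x ∂μ = 0) : f = 0 := by
  by_contra hne
  obtain ⟨x, hx⟩ := Function.ne_iff.mp hne
  exact (integral_pos_of_integrable_nonneg_nonzero hf hfi hf_nonneg hx).ne' hf_int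

theorem integral_const_mul_sub_const_mul_of_integral_eq_zero {X : Type*} [MeasurableSpace X]
    {μ : Measure X} {f g : X → ℝ} (hf : Integrable f μ) (hg : Integrable g μ)
    (hg_int : ∫ x, g x ∂μ = 0) (c : ℝ) :
    ∫ x, (c * f x - c * g x) ∂μ = c * ∫ x, f x ∂μ := by
  rw [integral_sub (hf.const_mul c) (hg.const_mul c), integral_const_mul, integral_const_mul,
    hg_int, mul_zero, sub_zero]

theorem nearHorizon_Lambda_zero_rigidity_general
    {H : Type*} [TopologicalSpace H] [CompactSpace H]
    [MeasurableSpace H] [BorelSpace H]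
    (μ : Measure H) [IsFiniteMeasure μ] [μ.IsOpenPosMeasure]
    {Ω T : Type*} [AddCommGroup Ω] [Module ℝ Ω] [AddCommGroup T] [Module ℝ T]
    (sq : Ω → H → ℝ) (divg : Ω → H → ℝ)
    (symProd : Ω → T) (symGrad : Ω → T)
    (sq_cont : ∀ ω, Continuous (sq ω)) (sq_nonneg : ∀ ω x, 0 ≤ sq ω x)
    (sq_definite : ∀ ω, (∀ x, sq ω x = 0) → ω = 0)
    (divg_cont : ∀ ω, Continuous (divg ω))
    (divergence_theorem : ∀ ω, ∫ x, divg ω x ∂μ = 0)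
    (symProd_zero : symProd 0 = 0) (symGrad_zero : symGrad 0 = 0)
    -- the near-horizon data:
    (h : Ω) (F : H → ℝ) (Ric : T)
    (eq1 : Ric = (1 / 2 : ℝ) • symProd h - symGrad h)
    (eq2 : ∀ x, F x = (1 / 2) * sq h x - (1 / 2) * divg h x)
    (hF_nonpos : ∀ x, F x ≤ 0) :
    (∀ x, F x = 0) ∧ h = 0 ∧ Ric = 0 := by
  have integrable : ∀ g : H → ℝ, Continuous g → Integrable g μ := fun g hg =>
    hg.integrable_of_hasCompactSupport (.of_compactSpace g)
  have hF_cont : Continuous F := by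
    rw [funext eq2]
    exact ((sq_cont h).const_mul _).sub ((divg_cont h).const_mul _)
  have hF_int : ∫ x, F x ∂μ = (1 / 2) * ∫ x, sq h x ∂μ := by
    simp_rw [eq2]
    exact integral_const_mul_sub_const_mul_of_integral_eq_zero (integrable _ (sq_cont h))
      (integrable _ (divg_cont h)) (divergence_theorem h) _
  have hF_int_zero : ∫ x, F x ∂μ = 0 :=
    (integral_nonpos hF_nonpos).antisymm
      (hF_int ▸ mul_nonneg (by norm_num) (integral_nonneg (sq_nonneg h)))
  have hF_zero : -F = 0 :=
    hF_cont.neg.eq_zero_of_integral_eq_zero_of_nonneg (integrable _ hF_cont.neg)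
      (fun x => neg_nonneg.2 (hF_nonpos x)) (by rw [Pi.neg_def, integral_neg, hF_int_zero, neg_zero])
  have hsq_zero : sq h = 0 :=
    (sq_cont h).eq_zero_of_integral_eq_zero_of_nonneg (integrable _ (sq_cont h)) (sq_nonneg h)
      (by linarith)
  have hh : h = 0 := sq_definite h (congrFun hsq_zero)
  refine ⟨congrFun (neg_eq_zero.mp hF_zero), hh, ?_⟩
  rw [eq1, hh, symProd_zero, symGrad_zero, smul_zero, sub_zero]

/-- Near-horizon data `(F, h_a, h_{ab})` of a degenerate horizon in a
static vacuum black hole with `Λ = 0`.  The compact closed cross-section `H` is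
modeled by a compact topological space with its Riemannian volume measure `μ`.
One-forms on `H` form a real vector space `Ω`, and symmetric 2-tensor fields form a
real vector space `T`.  For a 1-form `ω`: `sq ω` is the pointwise squared norm
(continuous, nonnegative, and definite: `|ω|² ≡ 0 → ω = 0`), `divg ω` its divergence
(integrating to zero by the divergence theorem), `symProd ω` is `ω_a ω_b`, and
`symGrad ω` is `∇_{(a}ω_{b)}` (both vanish for `ω = 0`).  Given the near-horizon
equations `Ric = ½ h⊗h − ∇_{(a}h_{b)}` and `F = ½|h|² − ½∇_a h^a` with `F ≤ 0`,
conclude `F ≡ 0`, `h = 0`, and `Ric = 0` (the metric `h_{ab}` is Ricci flat). -/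
theorem nearHorizon_Lambda_zero_rigidity
    {H : Type*} [TopologicalSpace H] [CompactSpace H] [Nonempty H]
    [MeasurableSpace H] [BorelSpace H]
    (μ : Measure H) [IsFiniteMeasure μ] [μ.IsOpenPosMeasure]
    {Ω T : Type*} [AddCommGroup Ω] [Module ℝ Ω] [AddCommGroup T] [Module ℝ T]
    (sq : Ω → H → ℝ) (divg : Ω → H → ℝ)
    (symProd : Ω → T) (symGrad : Ω → T)
    (sq_cont : ∀ ω, Continuous (sq ω)) (sq_nonneg : ∀ ω x, 0 ≤ sq ω x)
    (sq_definite : ∀ ω, (∀ x, sq ω x = 0) → ω = 0)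
    (divg_cont : ∀ ω, Continuous (divg ω))
    (divergence_theorem : ∀ ω, ∫ x, divg ω x ∂μ = 0)
    (symProd_zero : symProd 0 = 0) (symGrad_zero : symGrad 0 = 0)
    -- the near-horizon data:
    (h : Ω) (F : H → ℝ) (Ric : T)
    (hF_cont : Continuous F)
    (eq1 : Ric = (1 / 2 : ℝ) • symProd h - symGrad h)
    (eq2 : ∀ x, F x = (1 / 2) * sq h x - (1 / 2) * divg h x)
    (hF_nonpos : ∀ x, F x ≤ 0) :
    (∀ x, F x = 0) ∧ h = 0 ∧ Ric = 0 :=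
  nearHorizon_Lambda_zero_rigidity_general μ sq divg symProd symGrad sq_cont sq_nonneg sq_definite
    divg_cont divergence_theorem symProd_zero symGrad_zero h F Ric eq1 eq2 hF_nonpos
end

section
/- Let γ : [0, s₀] → M be a geodesic with Ric(γ', γ') = 2Λ/(n−1) − ∂_s² (φ∘γ) + (∂_s(φ∘γ))² along γ (the static vacuum equation contracted with γ'⊗γ'), Λ > 0. If s₀ > π√((n²−1)/(2Λ)), then with f(s) = sin(πs/s₀) one has ∫₀^{s₀}[(n−1)f'² − Ric(γ',γ') f²] ds + [f² ∂_s(φ∘γ)]₀^{s₀} < 0. -/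
open intervalIntegral Real

/-- second variation contradiction for `Λ > 0`: Let
`γ : [0, s₀] → M` be a geodesic along which the static vacuum equation contracted
with `γ'⊗γ'` holds: `Ric(γ', γ') = 2Λ/(n−1) − (φ∘γ)'' + ((φ∘γ)')²`, with `Λ > 0`
(here `ψ = φ∘γ`).  If `s₀ > π √((n²−1)/(2Λ))`, then with `f(s) = sin(πs/s₀)`,
`∫₀^{s₀} [(n−1) f'² − Ric(γ',γ') f²] ds + [f² (φ∘γ)']₀^{s₀} < 0`. -/
theorem second_variation_contradiction_positive_Lambda
    (n : ℕ) (hn : 2 ≤ n) (Λ s₀ : ℝ) (hΛ : 0 < Λ)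
    (ψ : ℝ → ℝ) (hψ : ContDiff ℝ (⊤ : ℕ∞) ψ)
    (Ricγ : ℝ → ℝ)
    (static_vacuum : ∀ s, Ricγ s =
      2 * Λ / ((n : ℝ) - 1) - deriv (deriv ψ) s + (deriv ψ s) ^ 2)
    (hs₀ : s₀ > π * Real.sqrt (((n : ℝ) ^ 2 - 1) / (2 * Λ))) :
    (∫ s in (0 : ℝ)..s₀,
        (((n : ℝ) - 1) * (deriv (fun u => Real.sin (π * u / s₀)) s) ^ 2
          - Ricγ s * (Real.sin (π * s / s₀)) ^ 2))
      + ((Real.sin (π * s₀ / s₀)) ^ 2 * deriv ψ s₀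
          - (Real.sin (π * 0 / s₀)) ^ 2 * deriv ψ 0) < 0 := by
  have hn' : (2 : ℝ) ≤ (n : ℝ) := by exact_mod_cast hn
  have hn1 : (0 : ℝ) < (n : ℝ) - 1 := by linarith
  have hB : 0 < ((n : ℝ) ^ 2 - 1) / (2 * Λ) :=
    div_pos (by nlinarith) (by linarith)
  have hs0 : 0 < s₀ :=
    lt_of_le_of_lt (mul_nonneg pi_pos.le (Real.sqrt_nonneg _)) hs₀
  set c : ℝ := π / s₀ with hc
  have hcpos : 0 < c := div_pos pi_pos hs0
  have hcs : c * s₀ = π := by rw [hc, div_mul_cancel₀ _ hs0.ne']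
  have hrw : ∀ s : ℝ, π * s / s₀ = c * s := fun s => by rw [hc]; ring
  set A : ℝ := 2 * Λ / ((n : ℝ) - 1) with hA
  -- key numeric inequality
  have h1 : π ^ 2 * ((n : ℝ) ^ 2 - 1) < 2 * Λ * s₀ ^ 2 := by
    have hsq : Real.sqrt (((n : ℝ) ^ 2 - 1) / (2 * Λ)) ^ 2
        = ((n : ℝ) ^ 2 - 1) / (2 * Λ) := Real.sq_sqrt hB.le
    have h2 : (π * Real.sqrt (((n : ℝ) ^ 2 - 1) / (2 * Λ))) ^ 2 < s₀ ^ 2 := by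
      apply sq_lt_sq' _ hs₀
      have := Real.sqrt_nonneg (((n : ℝ) ^ 2 - 1) / (2 * Λ))
      nlinarith [pi_pos]
    rw [mul_pow, hsq, ← mul_div_assoc,
      div_lt_iff₀ (by linarith : (0:ℝ) < 2 * Λ)] at h2
    linarith
  have hc2s : c ^ 2 * s₀ ^ 2 = π ^ 2 := by rw [hc]; field_simp
  have hnum : (n : ℝ) * c ^ 2 < A := by
    rw [hA, lt_div_iff₀ hn1]
    have hs2 : (0:ℝ) < s₀ ^ 2 := by positivity
    nlinarith [pi_pos]
  -- derivative of f
  have hf : ∀ s : ℝ, HasDerivAt (fun u => Real.sin (c * u)) (c * Real.cos (c * s)) s := by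
    intro s
    have := ((hasDerivAt_id s).const_mul c).sin
    simpa [mul_comm] using this
  have hfun : (fun u => Real.sin (π * u / s₀)) = fun u => Real.sin (c * u) :=
    funext fun u => by rw [hrw u]
  have hderiv_stmt : ∀ s : ℝ, deriv (fun u => Real.sin (π * u / s₀)) s
      = c * Real.cos (c * s) := fun s => by rw [hfun, (hf s).deriv]
  -- smoothness of ψ
  have hinf : ContDiff ℝ (⊤ : ℕ∞) ψ := hψ.of_le (by simp)
  obtain ⟨hd1, hψ'⟩ := contDiff_infty_iff_deriv.mp hinf
  have hd2 : Differentiable ℝ (deriv ψ) := hψ'.differentiable (by simp)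
  have hcψ' : Continuous (deriv ψ) := hd2.continuous
  have hcψ'' : Continuous (deriv (deriv ψ)) := hψ'.continuous_deriv (by simp)
  -- continuity of basic pieces
  have hcsin : Continuous fun s : ℝ => Real.sin (c * s) :=
    Real.continuous_sin.comp (continuous_const.mul continuous_id)
  have hccos : Continuous fun s : ℝ => Real.cos (c * s) :=
    Real.continuous_cos.comp (continuous_const.mul continuous_id)
  -- G and its derivative
  set G' : ℝ → ℝ := fun s => deriv (deriv ψ) s * Real.sin (c * s) ^ 2
      + deriv ψ s * (2 * Real.sin (c * s) * (c * Real.cos (c * s))) with hG'def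
  have hG : ∀ s : ℝ, HasDerivAt (fun t => deriv ψ t * Real.sin (c * t) ^ 2) (G' s) s := by
    intro s
    have h1 : HasDerivAt (deriv ψ) (deriv (deriv ψ) s) s := (hd2 s).hasDerivAt
    have h2 : HasDerivAt (fun t => Real.sin (c * t) ^ 2)
        (2 * Real.sin (c * s) * (c * Real.cos (c * s))) s := by
      simpa [pow_one] using (hf s).fun_pow 2
    simpa [hG'def] using h1.fun_mul h2
  have hcontG' : Continuous G' := by
    apply Continuous.add
    · exact hcψ''.mul (hcsin.pow 2)
    · exact hcψ'.mul ((continuous_const.mul hcsin).mul (continuous_const.mul hccos))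
  have hFTC : ∫ s in (0:ℝ)..s₀, G' s
      = deriv ψ s₀ * Real.sin (c * s₀) ^ 2 - deriv ψ 0 * Real.sin (c * 0) ^ 2 :=
    intervalIntegral.integral_eq_sub_of_hasDerivAt (fun s _ => hG s)
      (hcontG'.intervalIntegrable _ _)
  have hFTC0 : ∫ s in (0:ℝ)..s₀, G' s = 0 := by
    rw [hFTC, hcs]
    simp
  -- the explicit trig integrals
  have hIcos : ∫ s in (0:ℝ)..s₀, Real.cos (c * s) ^ 2 = s₀ / 2 := by
    rw [intervalIntegral.integral_comp_mul_left (fun x => Real.cos x ^ 2) hcpos.ne']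
    rw [mul_zero, hcs, integral_cos_sq]
    simp only [Real.sin_pi, Real.sin_zero, Real.cos_zero, smul_eq_mul]
    rw [hc]
    field_simp
    ring
  have hIsin : ∫ s in (0:ℝ)..s₀, Real.sin (c * s) ^ 2 = s₀ / 2 := by
    rw [intervalIntegral.integral_comp_mul_left (fun x => Real.sin x ^ 2) hcpos.ne']
    rw [mul_zero, hcs, integral_sin_sq]
    simp only [Real.sin_pi, Real.sin_zero, Real.cos_zero, smul_eq_mul]
    rw [hc]
    field_simp
    ring
  -- L and R
  set L : ℝ → ℝ := fun s => ((n : ℝ) - 1) * (c * Real.cos (c * s)) ^ 2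
      - Ricγ s * Real.sin (c * s) ^ 2 with hLdef
  set R : ℝ → ℝ := fun s => G' s
      + ((n : ℝ) * c ^ 2 * Real.cos (c * s) ^ 2 - A * Real.sin (c * s) ^ 2) with hRdef
  have hRic : Ricγ = fun s => A - deriv (deriv ψ) s + (deriv ψ s) ^ 2 :=
    funext fun s => by rw [static_vacuum s, hA]
  have hcontL : Continuous L := by
    rw [hLdef, hRic]
    apply Continuous.sub
    · exact continuous_const.mul ((continuous_const.mul hccos).pow 2)
    · exact ((continuous_const.sub hcψ'').add (hcψ'.pow 2)).mul (hcsin.pow 2)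
  have hcontR2 : Continuous fun s : ℝ =>
      (n : ℝ) * c ^ 2 * Real.cos (c * s) ^ 2 - A * Real.sin (c * s) ^ 2 :=
    (continuous_const.mul (hccos.pow 2)).sub (continuous_const.mul (hcsin.pow 2))
  have hcontR : Continuous R := hcontG'.add hcontR2
  have hLR : ∀ s : ℝ, L s ≤ R s := by
    intro s
    simp only [hLdef, hRdef, hG'def, hRic]
    nlinarith [sq_nonneg (deriv ψ s * Real.sin (c * s) + c * Real.cos (c * s))]
  have hmono : (∫ s in (0:ℝ)..s₀, L s) ≤ ∫ s in (0:ℝ)..s₀, R s :=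
    intervalIntegral.integral_mono_on hs0.le (hcontL.intervalIntegrable _ _)
      (hcontR.intervalIntegrable _ _) (fun s _ => hLR s)
  have hRval : (∫ s in (0:ℝ)..s₀, R s) = ((n : ℝ) * c ^ 2 - A) * (s₀ / 2) := by
    rw [hRdef]
    rw [intervalIntegral.integral_add (hcontG'.intervalIntegrable _ _)
      (hcontR2.intervalIntegrable _ _), hFTC0, zero_add]
    rw [intervalIntegral.integral_sub (f := fun s => (n : ℝ) * c ^ 2 * Real.cos (c * s) ^ 2)
      (g := fun s => A * Real.sin (c * s) ^ 2)
      ((continuous_const.mul (hccos.pow 2)).intervalIntegrable _ _)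
      ((continuous_const.mul (hcsin.pow 2)).intervalIntegrable _ _)]
    rw [intervalIntegral.integral_const_mul, intervalIntegral.integral_const_mul,
      hIcos, hIsin]
    ring
  have hRneg : (∫ s in (0:ℝ)..s₀, R s) < 0 := by
    rw [hRval]
    apply mul_neg_of_neg_of_pos (by linarith) (by linarith)
  -- rewrite the goal
  have hgoal_int : (∫ s in (0 : ℝ)..s₀,
      (((n : ℝ) - 1) * (deriv (fun u => Real.sin (π * u / s₀)) s) ^ 2
        - Ricγ s * (Real.sin (π * s / s₀)) ^ 2)) = ∫ s in (0:ℝ)..s₀, L s := by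
    apply intervalIntegral.integral_congr
    intro s _
    simp only [hderiv_stmt, hrw, hLdef]
    rw [(hf s).deriv]
  have hbdry : (Real.sin (π * s₀ / s₀)) ^ 2 * deriv ψ s₀
      - (Real.sin (π * 0 / s₀)) ^ 2 * deriv ψ 0 = 0 := by
    rw [hrw s₀, hrw 0, hcs, mul_zero]
    simp
  rw [hgoal_int, hbdry, add_zero]
  exact lt_of_le_of_lt hmono hRneg
end
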